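/- arXiv:2207.13944 — 3 statements merged into one kernel-verified Lean document; each statement's English description precedes it below -/
import Mathlib

section
/- For all x ∈ ℝ, c ∈ (0, 1/162), ε ∈ (0,1), and s ∈ (−ε, ε), the pointwise inequality exp(−c(x+s)²) ≤ [(exp(−c(x+ε)²) − exp(−c(x−ε)²))/(2ε)]·s + [(exp(−c(x+ε)²) + exp(−c(x−ε)²))/2]·exp(cε²) holds. -/
/-!
With `r = s / ε`, `b = -2cxε` and `d = cε²` the claim is `exp (-cx²)` times
`exp (r b - d r²) ≤ cosh b + exp (-d) r sinh b` for `|r| ≤ 1`, and `c < 1/162` gives `d ≤ 1/2`.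
By symmetry `b ≥ 0`. For `r ≤ 0` drop `-d r²` and use convexity of `exp`. For `r > 0` use the
sharper bound `exp (r b) ≤ 1 + r sinh b + r² (cosh b - 1)`: the factor `exp (-d r²)` exceeds
`exp (-d)` by at most `d (1 - r²)`, and this loss, weighted by `r sinh b`, is absorbed (via AM-GM)
by the gains `1 - exp (-d r²) ≥ d r² (1 - d)` and `(cosh b - 1) (1 - r²)`.
-/

open Real

namespace Real

/-- Differentiating in `b`, the gap is nondecreasing because its derivative is `r` times the
gap in `exp_mul_le_cosh_add_mul_sinh`. -/
theorem exp_mul_le_one_add_mul_sinh_add_sq_mul {b r : ℝ} (hb : 0 ≤ b) (hr₀ : 0 ≤ r)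
    (hr₁ : r ≤ 1) : exp (r * b) ≤ 1 + r * sinh b + r ^ 2 * (cosh b - 1) := by
  let gap : ℝ → ℝ := fun t => 1 + r * sinh t + r ^ 2 * (cosh t - 1) - exp (r * t)
  have hgap : ∀ t, HasDerivAt gap (r * cosh t + r ^ 2 * sinh t - exp (r * t) * r) t := by
    intro t
    have hexp : HasDerivAt (fun t => exp (r * t)) (exp (r * t) * r) t := by
      simpa using ((hasDerivAt_id t).const_mul r).exp
    exact ((((hasDerivAt_sinh t).const_mul r).const_add 1).add
      (((hasDerivAt_cosh t).sub_const 1).const_mul (r ^ 2))).sub hexp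
  have hmono : MonotoneOn gap (Set.Ici 0) := by
    refine monotoneOn_of_deriv_nonneg (convex_Ici 0)
      (fun t _ => (hgap t).continuousAt.continuousWithinAt)
      (fun t _ => (hgap t).differentiableAt.differentiableWithinAt) fun t _ => ?_
    rw [(hgap t).deriv]
    nlinarith [exp_mul_le_cosh_add_mul_sinh (abs_le.mpr ⟨by linarith, hr₁⟩) t]
  have := hmono Set.self_mem_Ici (Set.mem_Ici.mpr hb) hb
  simp only [gap, sinh_zero, cosh_zero, mul_zero, sub_self, exp_zero] at this
  linarith

theorem two_mul_mul_sinh_le (a b : ℝ) :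
    2 * a * sinh b ≤ a ^ 2 * (cosh b + 1) + (cosh b - 1) := by
  have hC : 0 < cosh b + 1 := by linarith [one_le_cosh b]
  have hsq : (a * (cosh b + 1) - sinh b) ^ 2
      = (cosh b + 1) * (a ^ 2 * (cosh b + 1) + (cosh b - 1) - 2 * a * sinh b) := by
    linear_combination -cosh_sq_sub_sinh_sq b
  nlinarith [sq_nonneg (a * (cosh b + 1) - sinh b)]

theorem exp_neg_sub_exp_neg_le {s t : ℝ} (hs : 0 ≤ s) (hst : s ≤ t) :
    exp (-s) - exp (-t) ≤ t - s := by
  have hsplit : exp (-t) = exp (-s) * exp (-(t - s)) := by rw [← exp_add]; ring_nf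
  have hlin := add_one_le_exp (-(t - s))
  have hs1 : exp (-s) ≤ 1 := exp_le_one_iff.mpr (by linarith)
  nlinarith [exp_pos (-s)]

theorem mul_one_sub_le_one_sub_exp_neg {t : ℝ} (ht : 0 ≤ t) : t * (1 - t) ≤ 1 - exp (-t) := by
  have hinv : exp t * exp (-t) = 1 := by rw [← exp_add]; simp
  have hlin := mul_le_mul_of_nonneg_right (add_one_le_exp t) (exp_pos (-t)).le
  nlinarith [mul_le_mul_of_nonneg_left (add_one_le_exp (-t)) ht]

theorem exp_mul_sub_mul_sq_le_of_nonneg {d r b : ℝ} (hd₀ : 0 ≤ d) (hd : d ≤ 1 / 2)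
    (hr : |r| ≤ 1) (hb : 0 ≤ b) :
    exp (r * b - d * r ^ 2) ≤ cosh b + exp (-d) * r * sinh b := by
  obtain ⟨hr₁, hr₂⟩ := abs_le.mp hr
  have hS : 0 ≤ sinh b := sinh_nonneg_iff.mpr hb
  have hY : exp (-d) ≤ 1 := exp_le_one_iff.mpr (by linarith)
  rcases le_or_gt r 0 with hr₀ | hr₀
  · calc exp (r * b - d * r ^ 2) ≤ exp (r * b) := exp_le_exp.mpr (by nlinarith)
      _ ≤ cosh b + r * sinh b := exp_mul_le_cosh_add_mul_sinh hr b
      _ ≤ cosh b + exp (-d) * r * sinh b := by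
          nlinarith [mul_nonneg (sub_nonneg.mpr hY) (mul_nonneg (neg_nonneg.mpr hr₀) hS)]
  set u := r ^ 2
  set C := cosh b
  have hu : u ≤ 1 := by nlinarith
  have hC : 1 ≤ C := one_le_cosh b
  have hdu : 0 ≤ d * u := mul_nonneg hd₀ (sq_nonneg r)
  have hX : exp (-(d * u)) ≤ 1 := exp_le_one_iff.mpr (by linarith)
  have hXY : exp (-(d * u)) - exp (-d) ≤ d * (1 - u) := by
    have := exp_neg_sub_exp_neg_le hdu (mul_le_of_le_one_right hd₀ hu)
    linarith
  have h1X : d * u * (1 - d) ≤ 1 - exp (-(d * u)) := by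
    have := mul_one_sub_le_one_sub_exp_neg hdu
    nlinarith [mul_le_of_le_one_right hd₀ hu]
  have hAMGM := two_mul_mul_sinh_le (r * d) b
  have hrS : 0 ≤ r * sinh b := mul_nonneg hr₀.le hS
  have hloss : r * sinh b * (exp (-(d * u)) - exp (-d))
      ≤ (1 - exp (-(d * u))) + (C - 1) * (1 - u * exp (-(d * u))) := by
    calc r * sinh b * (exp (-(d * u)) - exp (-d)) ≤ r * sinh b * (d * (1 - u)) :=
          mul_le_mul_of_nonneg_left hXY hrS
      _ ≤ (1 - u) * ((r * d) ^ 2 * (C + 1) + (C - 1)) / 2 := by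
          nlinarith [mul_le_mul_of_nonneg_left hAMGM (sub_nonneg.mpr hu)]
      _ ≤ d * u * (1 - d) + (C - 1) * (1 - u) := by
          nlinarith [mul_nonneg (mul_nonneg (sub_nonneg.mpr hC) (sub_nonneg.mpr hu))
            (show 0 ≤ 1 - d ^ 2 * u by nlinarith),
            mul_nonneg hdu (show 0 ≤ 1 - 2 * d + d * u by nlinarith)]
      _ ≤ _ := by
          nlinarith [mul_nonneg (sub_nonneg.mpr hC) (mul_nonneg (sq_nonneg r) (sub_nonneg.mpr hX))]
  calc exp (r * b - d * u) = exp (-(d * u)) * exp (r * b) := by rw [← exp_add]; ring_nf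
    _ ≤ exp (-(d * u)) * (1 + r * sinh b + u * (C - 1)) :=
        mul_le_mul_of_nonneg_left (exp_mul_le_one_add_mul_sinh_add_sq_mul hb hr₀.le hr₂)
          (exp_pos _).le
    _ ≤ C + exp (-d) * r * sinh b := by nlinarith

theorem exp_mul_sub_mul_sq_le {d r : ℝ} (hd₀ : 0 ≤ d) (hd : d ≤ 1 / 2) (hr : |r| ≤ 1)
    (b : ℝ) : exp (r * b - d * r ^ 2) ≤ cosh b + exp (-d) * r * sinh b := by
  rcases le_total 0 b with hb | hb
  · exact exp_mul_sub_mul_sq_le_of_nonneg hd₀ hd hr hb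
  · have h := exp_mul_sub_mul_sq_le_of_nonneg hd₀ hd (by rwa [abs_neg]) (neg_nonneg.mpr hb)
    rw [cosh_neg, sinh_neg] at h
    convert h using 2 <;> ring

end Real

/-- The Gaussian-type function `s ↦ exp(−c(x+s)²)` lies below the secant line through its
values at `s = ±ε`, lifted by the factor `exp(c ε²)`, for `c < 1/162`. -/
theorem stmt3 (x c ε s : ℝ) (hc : c ∈ Set.Ioo (0 : ℝ) (1 / 162))
    (hε : ε ∈ Set.Ioo (0 : ℝ) 1) (hs : s ∈ Set.Ioo (-ε) ε) :
    Real.exp (-c * (x + s) ^ 2) ≤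
      (Real.exp (-c * (x + ε) ^ 2) - Real.exp (-c * (x - ε) ^ 2)) / (2 * ε) * s +
        (Real.exp (-c * (x + ε) ^ 2) + Real.exp (-c * (x - ε) ^ 2)) / 2 *
          Real.exp (c * ε ^ 2) := by
  obtain ⟨hc₀, hc₁⟩ := hc
  obtain ⟨hε₀, hε₁⟩ := hε
  set b := -2 * c * x * ε
  set d := c * ε ^ 2
  set r := s / ε
  have hr : |r| ≤ 1 := by
    rw [abs_le, le_div_iff₀ hε₀, div_le_one hε₀]
    constructor <;> linarith [hs.1, hs.2]
  have key := exp_mul_sub_mul_sq_le (d := d) (by positivity)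
    (show c * ε ^ 2 ≤ 1 / 2 by nlinarith [pow_le_one₀ hε₀.le hε₁.le (n := 2)]) hr b
  have hgauss_s : exp (-c * (x + s) ^ 2) = exp (-c * x ^ 2) * exp (r * b - d * r ^ 2) := by
    rw [← exp_add]; congr 1; simp only [b, d, r]; field_simp; ring
  have hgauss_plus : exp (-c * (x + ε) ^ 2) = exp (-c * x ^ 2) * (exp b / exp d) := by
    rw [← exp_sub, ← exp_add]; simp only [b, d]; ring_nf
  have hgauss_minus : exp (-c * (x - ε) ^ 2) = exp (-c * x ^ 2) * (exp (-b) / exp d) := by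
    rw [← exp_sub, ← exp_add]; simp only [b, d]; ring_nf
  rw [hgauss_s, hgauss_plus, hgauss_minus]
  calc _ ≤ exp (-c * x ^ 2) * (cosh b + exp (-d) * r * sinh b) := by gcongr
    _ = _ := by
      rw [cosh_eq, sinh_eq, exp_neg d]
      field_simp
      linear_combination (exp b - exp (-b)) * div_mul_cancel₀ s hε₀.ne'
end

section
/- Let A and B be centered real Gaussian random variables with density functions φ_A and φ_B respectively. Then for every z ∈ ℝ and ε > 0, ∫_ℝ φ_B(x) · [P(A ∈ (z − x − ε, z − x + ε))]² dx ≤ ∫_ℝ φ_B(x) · [P(A ∈ (−x − ε, −x + ε))]² dx. -/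
open MeasureTheory Real

/-- The density of a centered real Gaussian with variance `v`. -/
noncomputable def gaussDensity (v : ℝ) : ℝ → ℝ :=
  fun y => (Real.sqrt (2 * π * v))⁻¹ * Real.exp (-y ^ 2 / (2 * v))

/-!
For symmetric decreasing functions `f` and `g` the rearrangement inequality
`(g x - g y) (f x - f y) ≥ 0` holds pointwise; integrating it over `y = z - x` and using the
invariance of Lebesgue measure under `x ↦ z - x` gives `∫ g(x) f(z - x) dx ≤ ∫ g(x) f(x) dx`.
The Gaussian density is symmetric decreasing, and so is the squared mass it gives to a window
`(u - ε, u + ε)`, viewed as a function of the centre `u`.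
-/

def IsSymmDecreasing (f : ℝ → ℝ) : Prop :=
  ∀ ⦃a b : ℝ⦄, |a| ≤ |b| → f b ≤ f a

namespace IsSymmDecreasing

variable {f g : ℝ → ℝ}

theorem of_even_of_antitoneOn (h_even : Function.Even f) (h_anti : AntitoneOn f (Set.Ici 0)) :
    IsSymmDecreasing f := by
  have h_abs : ∀ x, f |x| = f x := fun x => by
    rcases abs_choice x with h | h <;> simp only [h, h_even x]
  intro a b hab
  rw [← h_abs a, ← h_abs b]
  exact h_anti (abs_nonneg a) (abs_nonneg b) hab

theorem even (hf : IsSymmDecreasing f) : Function.Even f :=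
  fun x => le_antisymm (hf (abs_neg x).ge) (hf (abs_neg x).le)

theorem le_apply_zero (hf : IsSymmDecreasing f) (x : ℝ) : f x ≤ f 0 :=
  hf (by simp)

theorem pow (hf : IsSymmDecreasing f) (hf_nonneg : 0 ≤ f) (n : ℕ) :
    IsSymmDecreasing (fun x => f x ^ n) :=
  fun _ b hab => pow_le_pow_left₀ (hf_nonneg b) (hf hab) n

theorem sub_mul_sub_nonneg (hg : IsSymmDecreasing g) (hf : IsSymmDecreasing f) (x y : ℝ) :
    0 ≤ (g x - g y) * (f x - f y) := by
  rcases le_total |x| |y| with h | h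
  · exact mul_nonneg (sub_nonneg.mpr (hg h)) (sub_nonneg.mpr (hf h))
  · exact mul_nonneg_of_nonpos_of_nonpos (sub_nonpos.mpr (hg h)) (sub_nonpos.mpr (hf h))

end IsSymmDecreasing

theorem integral_mul_comp_sub_le_integral_mul {g f : ℝ → ℝ} (hg_int : Integrable g)
    (hg : IsSymmDecreasing g) (hf_meas : Measurable f) (hf_nonneg : 0 ≤ f)
    (hf : IsSymmDecreasing f) (z : ℝ) :
    ∫ x, g x * f (z - x) ≤ ∫ x, g x * f x := by
  have hf_bound (x : ℝ) : ‖f x‖ ≤ f 0 := by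
    rw [Real.norm_of_nonneg (hf_nonneg x)]
    exact hf.le_apply_zero x
  have h_int : Integrable (fun x => g x * f x) :=
    hg_int.mul_bdd hf_meas.aestronglyMeasurable (ae_of_all _ hf_bound)
  have h_int_shift : Integrable (fun x => g x * f (z - x)) :=
    hg_int.mul_bdd (hf_meas.comp (measurable_const.sub measurable_id)).aestronglyMeasurable
      (ae_of_all _ fun x => hf_bound (z - x))
  set D : ℝ → ℝ := fun x => g x * f x - g x * f (z - x)
  have hD : Integrable D := h_int.sub h_int_shift
  -- `D x + D (z - x)` is the rearrangement product, and `x ↦ z - x` preserves `∫ D`.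
  have h_two_mul : ∫ x, (D x + D (z - x)) = 2 * ∫ x, D x := by
    rw [integral_add hD (hD.comp_sub_left z), integral_sub_left_eq_self D volume z]
    ring
  have h_nonneg : 0 ≤ ∫ x, (D x + D (z - x)) := integral_nonneg fun x => by
    have h_rearrangement := hg.sub_mul_sub_nonneg hf x (z - x)
    simp only [D, sub_sub_cancel, Pi.zero_apply]
    linarith
  have hD_nonneg : 0 ≤ ∫ x, D x := by linarith
  rwa [integral_sub h_int h_int_shift, sub_nonneg] at hD_nonneg

noncomputable def windowIntegral (g : ℝ → ℝ) (ε u : ℝ) : ℝ :=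
  ∫ y in (u - ε)..(u + ε), g y

section windowIntegral

variable {g : ℝ → ℝ} {ε : ℝ}

theorem windowIntegral_nonneg (hg_nonneg : 0 ≤ g) (hε : 0 ≤ ε) (u : ℝ) :
    0 ≤ windowIntegral g ε u :=
  intervalIntegral.integral_nonneg (by linarith) fun y _ => hg_nonneg y

theorem continuous_windowIntegral (hg_int : ∀ a b, IntervalIntegrable g volume a b) :
    Continuous (windowIntegral g ε) := by
  have h_prim := intervalIntegral.continuous_primitive hg_int 0
  have h_eq : windowIntegral g ε = fun u =>
      (∫ y in (0 : ℝ)..(u + ε), g y) - ∫ y in (0 : ℝ)..(u - ε), g y := by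
    funext u
    exact (intervalIntegral.integral_interval_sub_left (hg_int _ _) (hg_int _ _)).symm
  rw [h_eq]
  exact (h_prim.comp (continuous_add_const ε)).sub (h_prim.comp (continuous_sub_right ε))

theorem even_windowIntegral (hg : Function.Even g) :
    Function.Even (windowIntegral g ε) := fun u => by
  have h_even : windowIntegral g ε u = ∫ y in (u - ε)..(u + ε), g (-y) :=
    intervalIntegral.integral_congr fun y _ => (hg y).symm
  rw [h_even, intervalIntegral.integral_comp_neg, windowIntegral]
  congr 1 <;> ring

/-- Moving the window from `a` to `b ≥ a ≥ 0` trades `(a - ε, b - ε)` for `(a + ε, b + ε)`,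
which is the same interval shifted by `2ε` away from the origin. -/
theorem windowIntegral_antitoneOn (hg : IsSymmDecreasing g)
    (hg_int : ∀ a b, IntervalIntegrable g volume a b) (hε : 0 ≤ ε) :
    AntitoneOn (windowIntegral g ε) (Set.Ici 0) := by
  intro a ha b _ hab
  have h_shift : ∫ y in (a + ε)..(b + ε), g y ≤ ∫ y in (a - ε)..(b - ε), g y := by
    have h_eq : ∫ y in (a - ε)..(b - ε), g y = ∫ y in (a + ε)..(b + ε), g (y - 2 * ε) := by
      rw [intervalIntegral.integral_comp_sub_right]
      congr 1 <;> ring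
    rw [h_eq]
    refine intervalIntegral.integral_mono_on (by linarith) (hg_int _ _)
      (by simpa only [sub_add_cancel] using
        (hg_int (a + ε - 2 * ε) (b + ε - 2 * ε)).comp_sub_right (2 * ε)) fun y hy => ?_
    have h_closer : |y - 2 * ε| ≤ |y| :=
      abs_le_abs (by linarith) (by linarith [hy.1, Set.mem_Ici.mp ha])
    exact hg h_closer
  have h_left := intervalIntegral.integral_add_adjacent_intervals (hg_int (a - ε) (a + ε))
    (hg_int (a + ε) (b + ε))
  have h_right := intervalIntegral.integral_add_adjacent_intervals (hg_int (a - ε) (b - ε))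
    (hg_int (b - ε) (b + ε))
  simp only [windowIntegral]
  linarith

theorem IsSymmDecreasing.windowIntegral (hg : IsSymmDecreasing g)
    (hg_int : ∀ a b, IntervalIntegrable g volume a b) (hε : 0 ≤ ε) :
    IsSymmDecreasing (windowIntegral g ε) :=
  .of_even_of_antitoneOn (even_windowIntegral hg.even) (windowIntegral_antitoneOn hg hg_int hε)

end windowIntegral

section gaussDensity

variable {v : ℝ}

theorem gaussDensity_eq_gaussianPDFReal (hv : 0 ≤ v) :
    gaussDensity v = ProbabilityTheory.gaussianPDFReal 0 v.toNNReal := by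
  funext y
  simp [gaussDensity, ProbabilityTheory.gaussianPDFReal, Real.coe_toNNReal _ hv]

theorem gaussDensity_nonneg (hv : 0 ≤ v) : 0 ≤ gaussDensity v := fun y => by
  rw [gaussDensity_eq_gaussianPDFReal hv]
  exact ProbabilityTheory.gaussianPDFReal_nonneg _ _ y

theorem integrable_gaussDensity (hv : 0 ≤ v) : Integrable (gaussDensity v) := by
  rw [gaussDensity_eq_gaussianPDFReal hv]
  exact ProbabilityTheory.integrable_gaussianPDFReal _ _

theorem isSymmDecreasing_gaussDensity (hv : 0 < v) : IsSymmDecreasing (gaussDensity v) := by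
  intro a b hab
  have h_sq : a ^ 2 ≤ b ^ 2 := sq_le_sq.mpr hab
  unfold gaussDensity
  gcongr

end gaussDensity

/-- For centered Gaussians `A`, `B`, the function
`z ↦ ∫ φ_B(x) [P(A ∈ (z−x−ε, z−x+ε))]² dx` is maximised at `z = 0`. -/
theorem stmt6 (σA σB : ℝ) (hσA : 0 < σA) (hσB : 0 < σB) (z ε : ℝ) (hε : 0 < ε) :
    ∫ x, gaussDensity (σB ^ 2) x *
        (∫ y in (z - x - ε)..(z - x + ε), gaussDensity (σA ^ 2) y) ^ 2 ≤
      ∫ x, gaussDensity (σB ^ 2) x *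
        (∫ y in (-x - ε)..(-x + ε), gaussDensity (σA ^ 2) y) ^ 2 := by
  have hA : 0 < σA ^ 2 := by positivity
  have hB : 0 < σB ^ 2 := by positivity
  have hA_int : ∀ a b, IntervalIntegrable (gaussDensity (σA ^ 2)) volume a b :=
    fun _ _ => (integrable_gaussDensity hA.le).intervalIntegrable
  have h_window : IsSymmDecreasing (windowIntegral (gaussDensity (σA ^ 2)) ε) :=
    (isSymmDecreasing_gaussDensity hA).windowIntegral hA_int hε.le
  have h_window_nonneg : 0 ≤ windowIntegral (gaussDensity (σA ^ 2)) ε :=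
    windowIntegral_nonneg (gaussDensity_nonneg hA.le) hε.le
  calc ∫ x, gaussDensity (σB ^ 2) x * windowIntegral (gaussDensity (σA ^ 2)) ε (z - x) ^ 2
      ≤ ∫ x, gaussDensity (σB ^ 2) x * windowIntegral (gaussDensity (σA ^ 2)) ε x ^ 2 :=
        integral_mul_comp_sub_le_integral_mul (integrable_gaussDensity hB.le)
          (isSymmDecreasing_gaussDensity hB)
          ((continuous_windowIntegral hA_int).pow 2).measurable
          (fun u => pow_nonneg (h_window_nonneg u) 2) (h_window.pow h_window_nonneg 2) z
    _ = ∫ x, gaussDensity (σB ^ 2) x * windowIntegral (gaussDensity (σA ^ 2)) ε (-x) ^ 2 := by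
        congr 1 with x
        rw [h_window.even x]
end

section
/- Let A ∼ N(0, σ_A²) in ℝ and ε ∈ (0,1). If σ_A² ≥ 81, then for all x ∈ ℝ, (∫_{x−ε}^{x+ε} φ_A(y) dy)² ≤ e^{ε²/σ_A²} · (1/√2) · ((2ε)²/√(2πσ_A²)) · (φ_{A/√2}(x+ε) + φ_{A/√2}(x−ε) + 2e^{−ε²/σ_A²}·φ_{A/√2}(x))/4, where φ_{A/√2} is the density of a N(0, σ_A²/2) random variable. -/
open MeasureTheory Real

lemma expBound (c x ε t : ℝ) (hc : 0 ≤ c) (hε : 0 < ε) (ht0 : 0 ≤ t) (htε : t ≤ ε) :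
    Real.exp (-(x + t) ^ 2 * c) ≤
      (1 - t / ε) * Real.exp (-x ^ 2 * c) +
        t / ε * Real.exp ((ε ^ 2 - (x + ε) ^ 2) * c) := by
  have hθ0 : 0 ≤ t / ε := div_nonneg ht0 hε.le
  have hθ1 : 0 ≤ 1 - t / ε := by
    have : t / ε ≤ 1 := (div_le_one hε).mpr htε
    linarith
  have hkey : (1 - t / ε) * (-x ^ 2 * c) + t / ε * ((ε ^ 2 - (x + ε) ^ 2) * c)
      = -(x + t) ^ 2 * c + t ^ 2 * c := by
    field_simp
    ring
  calc Real.exp (-(x + t) ^ 2 * c)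
      ≤ Real.exp ((1 - t / ε) * (-x ^ 2 * c) + t / ε * ((ε ^ 2 - (x + ε) ^ 2) * c)) := by
        apply Real.exp_le_exp.mpr
        rw [hkey]
        nlinarith [mul_nonneg (sq_nonneg t) hc]
    _ ≤ (1 - t / ε) * Real.exp (-x ^ 2 * c) + t / ε * Real.exp ((ε ^ 2 - (x + ε) ^ 2) * c) := by
        have := convexOn_exp.2 (Set.mem_univ (-x ^ 2 * c))
          (Set.mem_univ ((ε ^ 2 - (x + ε) ^ 2) * c)) hθ1 hθ0 (by ring)
        simpa using this

lemma linInt (a b ε : ℝ) (hε : 0 < ε) :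
    (∫ u in (0:ℝ)..ε, ((1 - u / ε) * a + u / ε * b)) = ε / 2 * (a + b) := by
  have h : ∀ u : ℝ, (1 - u / ε) * a + u / ε * b = a + u * ((b - a) / ε) := by
    intro u; field_simp; ring
  simp_rw [h]
  rw [intervalIntegral.integral_add intervalIntegrable_const
    (Continuous.intervalIntegrable (by continuity) 0 ε),
    intervalIntegral.integral_const, intervalIntegral.integral_mul_const]
  rw [show (∫ u in (0:ℝ)..ε, u) = (ε ^ 2 - 0 ^ 2) / 2 from integral_id]
  field_simp
  ring

/-- Key pointwise bound on the squared Gaussian window probability: for `A ∼ N(0, σ_A²)`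
with `σ_A² ≥ 81`, the squared mass of `[x−ε, x+ε]` is bounded via densities of
`N(0, σ_A²/2)`. -/
theorem stmt18 (σA ε : ℝ) (hσA : σA ^ 2 ≥ 81) (hε : ε ∈ Set.Ioo (0 : ℝ) 1) (x : ℝ) :
    (∫ y in (x - ε)..(x + ε), gaussDensity (σA ^ 2) y) ^ 2 ≤
      Real.exp (ε ^ 2 / σA ^ 2) * (1 / Real.sqrt 2) *
        ((2 * ε) ^ 2 / Real.sqrt (2 * π * σA ^ 2)) *
        ((gaussDensity (σA ^ 2 / 2) (x + ε) + gaussDensity (σA ^ 2 / 2) (x - ε) +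
            2 * Real.exp (-ε ^ 2 / σA ^ 2) * gaussDensity (σA ^ 2 / 2) x) / 4) := by
  obtain ⟨hε0, hε1⟩ := hε
  have hπ : (0:ℝ) < π := Real.pi_pos
  set v : ℝ := σA ^ 2 with hvdef
  have hv0 : (0:ℝ) < v := by nlinarith
  set c : ℝ := (2 * v)⁻¹ with hcdef
  have hc0 : (0:ℝ) < c := by positivity
  set K : ℝ := (Real.sqrt (2 * π * v))⁻¹ with hKdef
  have hK0 : (0:ℝ) < K := by
    have : (0:ℝ) < Real.sqrt (2 * π * v) := Real.sqrt_pos.mpr (by positivity)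
    positivity
  set E : ℝ := Real.exp (ε ^ 2 * c) with hEdef
  have hφ : ∀ y : ℝ, gaussDensity v y = K * Real.exp (-y ^ 2 * c) := by
    intro y
    rw [gaussDensity, div_eq_mul_inv]
  have hcont : Continuous (gaussDensity v) := by
    unfold gaussDensity
    fun_prop
  -- right half bound
  have hright : (∫ y in x..(x + ε), gaussDensity v y)
      ≤ ε / 2 * (gaussDensity v x + E * gaussDensity v (x + ε)) := by
    have hchg : (∫ u in (0:ℝ)..ε, gaussDensity v (x + u)) = ∫ y in x..(x + ε), gaussDensity v y := by
      rw [intervalIntegral.integral_comp_add_left (gaussDensity v) x]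
      norm_num
    rw [← hchg]
    calc (∫ u in (0:ℝ)..ε, gaussDensity v (x + u))
        ≤ ∫ u in (0:ℝ)..ε, ((1 - u / ε) * gaussDensity v x
            + u / ε * (E * gaussDensity v (x + ε))) := by
          apply intervalIntegral.integral_mono_on hε0.le
            ((hcont.comp (continuous_const.add continuous_id)).intervalIntegrable 0 ε)
            (Continuous.intervalIntegrable (by fun_prop) 0 ε)
          intro u hu
          simp only [Function.comp_apply, id_eq]
          rw [hφ, hφ, hφ]
          have hb := expBound c x ε u hc0.le hε0 hu.1 hu.2
          have hsplit : Real.exp ((ε ^ 2 - (x + ε) ^ 2) * c)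
              = E * Real.exp (-(x + ε) ^ 2 * c) := by
            rw [hEdef, ← Real.exp_add]; congr 1; ring
          rw [hsplit] at hb
          calc K * Real.exp (-(x + u) ^ 2 * c)
              ≤ K * ((1 - u / ε) * Real.exp (-x ^ 2 * c)
                  + u / ε * (E * Real.exp (-(x + ε) ^ 2 * c))) :=
                mul_le_mul_of_nonneg_left hb hK0.le
            _ = (1 - u / ε) * (K * Real.exp (-x ^ 2 * c))
                  + u / ε * (E * (K * Real.exp (-(x + ε) ^ 2 * c))) := by ring
      _ = ε / 2 * (gaussDensity v x + E * gaussDensity v (x + ε)) := linInt _ _ _ hε0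
  -- left half bound
  have hleft : (∫ y in (x - ε)..x, gaussDensity v y)
      ≤ ε / 2 * (gaussDensity v x + E * gaussDensity v (x - ε)) := by
    have hchg : (∫ u in (0:ℝ)..ε, gaussDensity v (x - u)) = ∫ y in (x - ε)..x, gaussDensity v y := by
      rw [intervalIntegral.integral_comp_sub_left (gaussDensity v) x]
      norm_num
    rw [← hchg]
    calc (∫ u in (0:ℝ)..ε, gaussDensity v (x - u))
        ≤ ∫ u in (0:ℝ)..ε, ((1 - u / ε) * gaussDensity v x
            + u / ε * (E * gaussDensity v (x - ε))) := by
          apply intervalIntegral.integral_mono_on hε0.le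
            ((hcont.comp (continuous_const.sub continuous_id)).intervalIntegrable 0 ε)
            (Continuous.intervalIntegrable (by fun_prop) 0 ε)
          intro u hu
          simp only [Function.comp_apply, id_eq]
          rw [hφ, hφ, hφ]
          have hb := expBound c (-x) ε u hc0.le hε0 hu.1 hu.2
          rw [show (-x + u) ^ 2 = (x - u) ^ 2 by ring, show (-x) ^ 2 = x ^ 2 by ring,
            show (-x + ε) ^ 2 = (x - ε) ^ 2 by ring] at hb
          have hsplit : Real.exp ((ε ^ 2 - (x - ε) ^ 2) * c)
              = E * Real.exp (-(x - ε) ^ 2 * c) := by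
            rw [hEdef, ← Real.exp_add]; congr 1; ring
          rw [hsplit] at hb
          calc K * Real.exp (-(x - u) ^ 2 * c)
              ≤ K * ((1 - u / ε) * Real.exp (-x ^ 2 * c)
                  + u / ε * (E * Real.exp (-(x - ε) ^ 2 * c))) :=
                mul_le_mul_of_nonneg_left hb hK0.le
            _ = (1 - u / ε) * (K * Real.exp (-x ^ 2 * c))
                  + u / ε * (E * (K * Real.exp (-(x - ε) ^ 2 * c))) := by ring
      _ = ε / 2 * (gaussDensity v x + E * gaussDensity v (x - ε)) := linInt _ _ _ hε0
  -- combine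
  have hsplit : (∫ y in (x - ε)..(x + ε), gaussDensity v y)
      = (∫ y in (x - ε)..x, gaussDensity v y) + ∫ y in x..(x + ε), gaussDensity v y :=
    (intervalIntegral.integral_add_adjacent_intervals
      (hcont.intervalIntegrable _ _) (hcont.intervalIntegrable _ _)).symm
  set p : ℝ := gaussDensity v (x + ε) with hpdef
  set q : ℝ := gaussDensity v (x - ε) with hqdef
  set r : ℝ := gaussDensity v x with hrdef
  have hM : (∫ y in (x - ε)..(x + ε), gaussDensity v y)
      ≤ ε / 2 * (E * p + E * q + 2 * r) := by
    rw [hsplit]; rw [hpdef, hqdef, hrdef]; linarith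
  have hI0 : 0 ≤ ∫ y in (x - ε)..(x + ε), gaussDensity v y := by
    apply intervalIntegral.integral_nonneg (by linarith)
    intro u _
    rw [hφ]
    positivity
  have hp0 : 0 ≤ p := by rw [hpdef, hφ]; positivity
  have hq0 : 0 ≤ q := by rw [hqdef, hφ]; positivity
  have hr0 : 0 ≤ r := by rw [hrdef, hφ]; positivity
  have hE0 : 0 ≤ E := Real.exp_nonneg _
  have hsq : (∫ y in (x - ε)..(x + ε), gaussDensity v y) ^ 2
      ≤ (ε / 2 * (E * p + E * q + 2 * r)) ^ 2 := pow_le_pow_left₀ hI0 hM 2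
  have hcauchy : (ε / 2 * (E * p + E * q + 2 * r)) ^ 2
      ≤ ε ^ 2 * (E ^ 2 * p ^ 2 + E ^ 2 * q ^ 2 + 2 * r ^ 2) := by
    nlinarith [sq_nonneg (E * p - E * q), sq_nonneg (E * p - r), sq_nonneg (E * q - r),
      sq_nonneg ε, sq_nonneg (ε * (E * p - E * q)), sq_nonneg (ε * (E * p - r)),
      sq_nonneg (ε * (E * q - r))]
  refine (hsq.trans hcauchy).trans (le_of_eq ?_)
  -- now pure algebra
  have hs2 : Real.sqrt (2 * π * v) = Real.sqrt 2 * Real.sqrt (π * v) := by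
    rw [mul_assoc, Real.sqrt_mul (by norm_num)]
  have hGhalf : ∀ y : ℝ, gaussDensity (v / 2) y
      = (Real.sqrt (π * v))⁻¹ * Real.exp (-y ^ 2 * (2 * c)) := by
    intro y
    rw [gaussDensity, show 2 * π * (v / 2) = π * v by ring]
    congr 1
    rw [hcdef]
    field_simp
  have hsqdens : ∀ y : ℝ, (gaussDensity v y) ^ 2
      = K * (Real.sqrt 2)⁻¹ * gaussDensity (v / 2) y := by
    intro y
    have he : Real.exp (-y ^ 2 * c) ^ 2 = Real.exp (-y ^ 2 * (2 * c)) := by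
      rw [sq, ← Real.exp_add]; congr 1; ring
    rw [hφ, hGhalf, mul_pow, he, hKdef, hs2, mul_inv]
    ring
  have hE2 : E ^ 2 = Real.exp (ε ^ 2 / v) := by
    rw [hEdef, sq, ← Real.exp_add, hcdef]
    congr 1
    field_simp
    ring
  have hEneg : Real.exp (-ε ^ 2 / v) = (Real.exp (ε ^ 2 / v))⁻¹ := by
    rw [← Real.exp_neg]
    congr 1
    ring
  rw [hpdef, hqdef, hrdef, hsqdens, hsqdens, hsqdens, hE2, hEneg]
  have hexpne : Real.exp (ε ^ 2 / v) ≠ 0 := Real.exp_ne_zero _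
  have hs2ne : Real.sqrt 2 ≠ 0 := by positivity
  rw [hKdef]
  field_simp
  ring
end
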